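/- arXiv:2604.03442 — 2 statements merged into one kernel-verified Lean document; each statement's English description precedes it below -/
import Mathlib

section
/- Let x ∈ ℝⁿ with 0 < |x| and 0 < r < 1 − |x|. Then the quadratic equation (|a|² + 1)/|a| = (1 + |x|² − r²)/|x| in |a| has a unique solution with |a| > 1, and moreover |a| − 1 > 1 − |x| − r. -/
open Set

/-! The map `a ↦ a + a⁻¹ = (a² + 1)/a` is strictly increasing on `[1, ∞)` and sends `1` to `2`,
so the equation has exactly one solution `a > 1` as soon as the right-hand side `b` exceeds `2`.
Both that and the bound `a > 2 - |x| - r` then follow from the single polynomial inequality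
`c + c⁻¹ < b` at `c = 2 - |x| - r > 1`. -/

lemma sq_add_one_div_self {a : ℝ} (ha : a ≠ 0) : (a ^ 2 + 1) / a = a + a⁻¹ := by
  field_simp

lemma strictMonoOn_add_inv : StrictMonoOn (fun a : ℝ => a + a⁻¹) (Ici 1) := by
  intro a ha b hb hab
  have ha0 : 0 < a := zero_lt_one.trans_le ha
  have hb0 : 0 < b := ha0.trans hab
  have hab1 : 1 < a * b := one_lt_mul_of_le_of_lt ha (lt_of_le_of_lt ha hab)
  show a + a⁻¹ < b + b⁻¹
  rw [← sub_pos]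
  have key : b + b⁻¹ - (a + a⁻¹) = (b - a) * (a * b - 1) / (a * b) := by
    field_simp
    ring
  rw [key]
  exact div_pos (mul_pos (sub_pos.mpr hab) (sub_pos.mpr hab1)) (mul_pos ha0 hb0)

lemma exists_one_lt_add_inv_eq {b : ℝ} (hb : 2 < b) : ∃ a : ℝ, 1 < a ∧ a + a⁻¹ = b := by
  have hD : 0 < b ^ 2 - 4 := by nlinarith
  set d := √(b ^ 2 - 4)
  have hd0 : 0 < d := Real.sqrt_pos.mpr hD
  have hd2 : d ^ 2 = b ^ 2 - 4 := Real.sq_sqrt hD.le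
  refine ⟨(b + d) / 2, by linarith, ?_⟩
  -- the two roots `(b ± d)/2` of `a² - b a + 1` are inverse to each other
  have hinv : ((b + d) / 2)⁻¹ = (b - d) / 2 :=
    inv_eq_of_mul_eq_one_right (by linear_combination (-1 / 4 : ℝ) * hd2)
  rw [hinv]
  ring

lemma two_sub_add_inv_lt {s r : ℝ} (hs : 0 < s) (hr : 0 < r) (hsr : s + r < 1) :
    (2 - s - r) + (2 - s - r)⁻¹ < (1 + s ^ 2 - r ^ 2) / s := by
  have hc : 0 < 2 - s - r := by linarith
  rw [← sub_pos]
  have key : (1 + s ^ 2 - r ^ 2) / s - ((2 - s - r) + (2 - s - r)⁻¹)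
      = (1 - s - r) * (2 * (1 - s) ^ 2 + r * (1 + s - r)) / (s * (2 - s - r)) := by
    field_simp
    ring
  rw [key]
  have h1 : 0 < 1 - s - r := by linarith
  have h2 : 0 < 2 * (1 - s) ^ 2 + r * (1 + s - r) := by nlinarith
  positivity

theorem inversion_center_exists_unique_general {n : ℕ}
    (x : EuclideanSpace ℝ (Fin n)) (r : ℝ)
    (hx : x ≠ 0) (hr0 : 0 < r) (hr1 : r < 1 - ‖x‖) :
    (∃! A : ℝ, 1 < A ∧ (A ^ 2 + 1) / A = (1 + ‖x‖ ^ 2 - r ^ 2) / ‖x‖) ∧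
    (∀ A : ℝ, 1 < A → (A ^ 2 + 1) / A = (1 + ‖x‖ ^ 2 - r ^ 2) / ‖x‖ →
      A - 1 > 1 - ‖x‖ - r) := by
  set b := (1 + ‖x‖ ^ 2 - r ^ 2) / ‖x‖
  set f : ℝ → ℝ := fun a => a + a⁻¹
  have hsol : ∀ A : ℝ, 1 < A → ((A ^ 2 + 1) / A = b ↔ f A = b) := fun A hA => by
    rw [sq_add_one_div_self (by positivity)]
  have hc : 1 < 2 - ‖x‖ - r := by linarith
  have hcb : f (2 - ‖x‖ - r) < b := two_sub_add_inv_lt (norm_pos_iff.mpr hx) hr0 (by linarith)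
  have hb : 2 < b := calc
    2 = f 1 := by norm_num [f]
    _ < f (2 - ‖x‖ - r) := strictMonoOn_add_inv (mem_Ici.mpr le_rfl) hc.le hc
    _ < b := hcb
  obtain ⟨A₀, hA₀, hfA₀⟩ := exists_one_lt_add_inv_eq hb
  refine ⟨⟨A₀, ⟨hA₀, (hsol A₀ hA₀).mpr hfA₀⟩, fun A ⟨hA, hAb⟩ => ?_⟩, fun A hA hAb => ?_⟩
  · exact strictMonoOn_add_inv.injOn hA.le hA₀.le (((hsol A hA).mp hAb).trans hfA₀.symm)
  · have hcA : 2 - ‖x‖ - r < A :=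
      (strictMonoOn_add_inv.lt_iff_lt hc.le hA.le).mp (hcb.trans_eq ((hsol A hA).mp hAb).symm)
    linarith

/-- For `x ≠ 0` and `0 < r < 1 − |x|`, the equation
`(|a|² + 1)/|a| = (1 + |x|² − r²)/|x|` has a unique solution `|a| > 1`, and any such
solution satisfies `|a| − 1 > 1 − |x| − r`. -/
theorem inversion_center_exists_unique {n : ℕ} (hn : 2 ≤ n)
    (x : EuclideanSpace ℝ (Fin n)) (r : ℝ)
    (hx : x ≠ 0) (hr0 : 0 < r) (hr1 : r < 1 - ‖x‖) :
    (∃! A : ℝ, 1 < A ∧ (A ^ 2 + 1) / A = (1 + ‖x‖ ^ 2 - r ^ 2) / ‖x‖) ∧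
    (∀ A : ℝ, 1 < A → (A ^ 2 + 1) / A = (1 + ‖x‖ ^ 2 - r ^ 2) / ‖x‖ →
      A - 1 > 1 - ‖x‖ - r) :=
  inversion_center_exists_unique_general x r hx hr0 hr1
end

section
/- Let x ≠ 0, 0 < r < 1 − |x|, |a| > 1 with (|a|²+1)/|a| = (1+|x|²−r²)/|x|, and (r_t*)² = |a|(1−|a|t)/(|a|−t) for t ∈ [0,|x|]. Then for all t ∈ (0,|x|], the ratio α_t := log(r_t*)/log(r_{|x|}*) satisfies α_t > t²(1 − |x| − r)/log((1 − |x|²)/r). -/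
/-!
Write `X = |x|` and `s_t = (r_t*)² = A(1 - At)/(A - t)`. Clearing denominators, the relation
between `A`, `X`, `r` becomes `r²A = (A - X)(1 - AX)`, so `AX < 1` and `r_X* = Ar/(A - X)`.

Numerator: `log s ≤ s - 1` and `1 - s_t = t(A² - 1)/(A - t)` give
`-log r_t* ≥ t(A² - 1)/(2(A - t))`, and this is at least `t²(1 - X - r)` because
`t(A - t) ≤ AX` and `2AX(1 - X - r) ≤ A² - 1`. The latter holds after squaring, since
`X²(A² - 1)² = A²(1 - X - r)(1 - X + r)((1 + X)² - r²)` and `(1 + X)² - r² > 4X`.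

Denominator: `0 < -log r_X* = log((A - X)/(Ar)) < log((1 - X²)/r)` because `AX < 1`.
-/

open Real

noncomputable def rStar (A t : ℝ) : ℝ := √(A * (1 - A * t) / (A - t))

lemma one_sub_div_two_le_neg_log_sqrt {s : ℝ} (hs : 0 < s) : (1 - s) / 2 ≤ -log √s := by
  rw [log_sqrt hs.le]
  linarith [log_le_sub_one_of_pos hs]

lemma one_sub_rStar_sq {A t : ℝ} (htA : t < A) :
    1 - A * (1 - A * t) / (A - t) = t * (A ^ 2 - 1) / (A - t) := by
  field_simp [(sub_pos.mpr htA).ne']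
  ring

lemma div_le_neg_log_rStar {A t : ℝ} (hA : 0 < A) (hAt : A * t < 1) (htA : t < A) :
    t * (A ^ 2 - 1) / (2 * (A - t)) ≤ -log (rStar A t) := by
  have hs : 0 < A * (1 - A * t) / (A - t) := div_pos (by nlinarith) (by linarith)
  have := one_sub_div_two_le_neg_log_sqrt hs
  rw [one_sub_rStar_sq htA, div_div, mul_comm (A - t)] at this
  exact this

lemma four_mul_pow_four_mul_sq_le {X r : ℝ} (hX : 0 ≤ X) (hr : 0 ≤ r) (hXr : X + r < 1) :
    4 * X ^ 4 * (1 - X - r) ^ 2 ≤ (1 + X ^ 2 - r ^ 2) ^ 2 - 4 * X ^ 2 := by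
  have hfactor : (1 + X ^ 2 - r ^ 2) ^ 2 - 4 * X ^ 2
      = (1 - X - r) * ((1 - X + r) * ((1 + X) ^ 2 - r ^ 2)) := by ring
  have hX4 : X ^ 4 ≤ X := pow_le_of_le_one hX (by linarith) (by norm_num)
  have hr2 : 4 * X < (1 + X) ^ 2 - r ^ 2 := by nlinarith
  rw [hfactor, sq, mul_comm (4 * X ^ 4), mul_assoc]
  gcongr <;> linarith

section

variable {X r A : ℝ} (h : (A ^ 2 + 1) * X = (1 + X ^ 2 - r ^ 2) * A)
include h

lemma sq_mul_eq_of_rel : r ^ 2 * A = (A - X) * (1 - A * X) := by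
  linear_combination h

lemma mul_lt_one_of_rel (hr : 0 < r) (hA : 0 < A) (hXA : X < A) : A * X < 1 := by
  have : 0 < (A - X) * (1 - A * X) := by rw [← sq_mul_eq_of_rel h]; positivity
  nlinarith [(mul_pos_iff_of_pos_left (sub_pos.mpr hXA)).mp this]

lemma rStar_eq_of_rel (hr : 0 ≤ r) (hA : 0 < A) (hXA : X < A) :
    rStar A X = A * r / (A - X) := by
  have hAX : 0 < A - X := sub_pos.mpr hXA
  have hsq : A * (1 - A * X) / (A - X) = (A * r / (A - X)) ^ 2 := by
    rw [div_pow, mul_pow, div_eq_div_iff hAX.ne' (by positivity)]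
    linear_combination (-(A * (A - X))) * sq_mul_eq_of_rel h
  rw [rStar, hsq, sqrt_sq (by positivity)]

lemma neg_log_rStar_pos_of_rel (hX : 0 < X) (hr : 0 < r) (hA : 1 < A) (hXA : X < A) :
    0 < -log (rStar A X) := by
  have hAX : 0 < A - X := sub_pos.mpr hXA
  rw [rStar_eq_of_rel h hr.le (by linarith) hXA, neg_pos]
  refine log_neg (by positivity) ((div_lt_one hAX).mpr ?_)
  have : (A * r) ^ 2 < (A - X) ^ 2 := by
    nlinarith [sq_mul_eq_of_rel h, mul_pos hX (show (0 : ℝ) < A ^ 2 - 1 by nlinarith)]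
  exact (pow_lt_pow_iff_left₀ (by positivity) hAX.le two_ne_zero).mp this

lemma neg_log_rStar_lt_of_rel (hX : 0 < X) (hr : 0 < r) (hA : 0 < A) (hXA : X < A) :
    -log (rStar A X) < log ((1 - X ^ 2) / r) := by
  have hAX := mul_lt_one_of_rel h hr hA hXA
  rw [rStar_eq_of_rel h hr.le hA hXA, ← log_inv, inv_div]
  apply log_lt_log (div_pos (by linarith) (by positivity))
  rw [div_lt_div_iff₀ (by positivity) hr]
  nlinarith [mul_lt_mul_of_pos_right hAX (mul_pos hX hr)]

lemma two_mul_mul_le_sq_sub_one_of_rel (hX : 0 < X) (hr : 0 < r) (hXr : X + r < 1)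
    (hA : 1 < A) : 2 * A * X * (1 - X - r) ≤ A ^ 2 - 1 := by
  have hsq : X ^ 2 * (A ^ 2 - 1) ^ 2 = A ^ 2 * ((1 + X ^ 2 - r ^ 2) ^ 2 - 4 * X ^ 2) := by
    linear_combination (X * (A ^ 2 + 1) + (1 + X ^ 2 - r ^ 2) * A) * h
  have hpoly := four_mul_pow_four_mul_sq_le hX.le hr.le hXr
  have : (2 * A * X * (1 - X - r)) ^ 2 ≤ (A ^ 2 - 1) ^ 2 := by
    refine le_of_mul_le_mul_left ?_ (pow_pos hX 2)
    rw [hsq]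
    nlinarith [mul_le_mul_of_nonneg_left hpoly (sq_nonneg A)]
  have hpos : 0 < 2 * A * X * (1 - X - r) := mul_pos (by positivity) (by linarith)
  exact (pow_le_pow_iff_left₀ hpos.le (by nlinarith) two_ne_zero).mp this

lemma sq_mul_le_neg_log_rStar_of_rel (hX : 0 < X) (hr : 0 < r) (hXr : X + r < 1)
    (hA : 1 < A) {t : ℝ} (ht : 0 < t) (htX : t ≤ X) :
    t ^ 2 * (1 - X - r) ≤ -log (rStar A t) := by
  have hAX := mul_lt_one_of_rel h hr (by linarith) (by linarith)
  have hcore := two_mul_mul_le_sq_sub_one_of_rel h hX hr hXr hA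
  have htA : 0 < A - t := by linarith
  refine le_trans ?_ (div_le_neg_log_rStar (by linarith) (by nlinarith) (by linarith))
  rw [le_div_iff₀ (by positivity)]
  nlinarith [mul_le_mul htX (show A - t ≤ A by linarith) htA.le hX.le,
    mul_nonneg ht.le (show (0 : ℝ) ≤ 1 - X - r by linarith)]

end

theorem alpha_lower_bound_general {n : ℕ}
    (x : EuclideanSpace ℝ (Fin n)) (r A : ℝ)
    (hx : x ≠ 0) (hr0 : 0 < r) (hr1 : r < 1 - ‖x‖) (hA : 1 < A)
    (hAeq : (A ^ 2 + 1) / A = (1 + ‖x‖ ^ 2 - r ^ 2) / ‖x‖) :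
    ∀ t : ℝ, 0 < t → t ≤ ‖x‖ →
      Real.log (Real.sqrt (A * (1 - A * t) / (A - t)))
          / Real.log (Real.sqrt (A * (1 - A * ‖x‖) / (A - ‖x‖)))
        > t ^ 2 * (1 - ‖x‖ - r) / Real.log ((1 - ‖x‖ ^ 2) / r) := by
  intro t ht htX
  set X := ‖x‖
  have hX : 0 < X := norm_pos_iff.mpr hx
  have h : (A ^ 2 + 1) * X = (1 + X ^ 2 - r ^ 2) * A := by
    rwa [div_eq_div_iff (by positivity) hX.ne'] at hAeq
  have hden_pos := neg_log_rStar_pos_of_rel h hX hr0 hA (by linarith)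
  have hden := neg_log_rStar_lt_of_rel h hX hr0 (by linarith) (by linarith)
  have hnum := sq_mul_le_neg_log_rStar_of_rel h hX hr0 (by linarith) hA ht htX
  have hc : 0 < t ^ 2 * (1 - X - r) := mul_pos (by positivity) (by linarith)
  show t ^ 2 * (1 - X - r) / log ((1 - X ^ 2) / r) < log (rStar A t) / log (rStar A X)
  rw [← neg_div_neg_eq (log (rStar A t))]
  calc t ^ 2 * (1 - X - r) / log ((1 - X ^ 2) / r)
      < t ^ 2 * (1 - X - r) / -log (rStar A X) :=
        div_lt_div_of_pos_left hc hden_pos hden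
    _ ≤ -log (rStar A t) / -log (rStar A X) := by gcongr

/-- inequality (16): Let `x ≠ 0`, `0 < r < 1 − |x|`, `A = |a| > 1` with
`(A² + 1)/A = (1 + |x|² − r²)/|x|`, and `r_t* = √(A(1 − A t)/(A − t))` for `t ∈ [0,|x|]`.
Then for all `t ∈ (0,|x|]` the ratio `α_t = log(r_t*)/log(r_{|x|}*)` satisfies
`α_t > t²(1 − |x| − r)/log((1 − |x|²)/r)`. -/
theorem alpha_lower_bound {n : ℕ} (hn : 2 ≤ n)
    (x : EuclideanSpace ℝ (Fin n)) (r A : ℝ)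
    (hx : x ≠ 0) (hr0 : 0 < r) (hr1 : r < 1 - ‖x‖) (hA : 1 < A)
    (hAeq : (A ^ 2 + 1) / A = (1 + ‖x‖ ^ 2 - r ^ 2) / ‖x‖) :
    ∀ t : ℝ, 0 < t → t ≤ ‖x‖ →
      Real.log (Real.sqrt (A * (1 - A * t) / (A - t)))
          / Real.log (Real.sqrt (A * (1 - A * ‖x‖) / (A - ‖x‖)))
        > t ^ 2 * (1 - ‖x‖ - r) / Real.log ((1 - ‖x‖ ^ 2) / r) :=
  alpha_lower_bound_general x r A hx hr0 hr1 hA hAeq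
end
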